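/- arXiv:2111.10968 — 7 statements merged into one kernel-verified Lean document; each statement's English description precedes it below -/
import Mathlib

section
/- A functor F : Set → Set preserves connected limits if and only if it is (isomorphic to) a polynomial functor, i.e. a coproduct of representable functors. -/
universe u

open CategoryTheory CategoryTheory.Limits

/-- The endofunctor of `Type u` underlying a polynomial functor. -/
def PFunctor.toFunctor (P : PFunctor.{u}) : Type u ⥤ Type u where
  obj := P.Obj
  map f := TypeCat.ofHom (P.map f)
  map_id := by intro X; refine ConcreteCategory.hom_ext _ _ fun x => ?_; cases x; rfl
  map_comp := by intro X Y Z f g; refine ConcreteCategory.hom_ext _ _ fun x => ?_; cases x; rfl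

/-!
Every `F : Type u ⥤ Type u` is the coproduct, over `i : F PUnit`, of its fibres
`X ↦ {y : F X // F (X → PUnit) y = i}`, and a polynomial functor is a coproduct of the
corepresentables `X ↦ (B a → X)`.

Coproducts of types commute with connected limits: over a connected diagram, a compatible family
in a sigma type has a constant first component, so it lives in a single summand. As
corepresentables preserve all limits, polynomial functors preserve connected limits.

Conversely, a limit of shape `J` in a fibre over `i` is the limit of shape `WithTerminal J`
in `F` obtained by sending the terminal vertex to `PUnit` and choosing `i` there; `WithTerminal J`
is connected, so if `F` preserves connected limits then every fibre preserves all limits. Since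
`ULift Prop` is a coseparator of `Type u`, the special adjoint functor theorem makes every fibre a
right adjoint, hence corepresentable.
-/

namespace CategoryTheory

def Functor.sigma {I : Type u} (G : I → Type u ⥤ Type u) : Type u ⥤ Type u where
  obj X := Σ i, (G i).obj X
  map f := TypeCat.ofHom fun p => ⟨p.1, (G p.1).map f p.2⟩

section Sigma

variable {I : Type u} (G : I → Type u ⥤ Type u)

def Functor.sigmaMapIso {H : I → Type u ⥤ Type u} (e : ∀ i, G i ≅ H i) :
    Functor.sigma G ≅ Functor.sigma H :=
  NatIso.ofComponents
    (fun X => (Equiv.sigmaCongrRight fun i => ((e i).app X).toEquiv).toIso)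
    (fun f => by
      ext ⟨i, y⟩
      exact congrArg (Sigma.mk i) ((e i).hom.naturality_apply f y))

theorem Functor.exists_eq_sigma_mk_of_mem_sections {J : Type*} [Category J] [IsConnected J]
    {K : J ⥤ Type u} {s : ∀ j, (K ⋙ Functor.sigma G).obj j}
    (hs : s ∈ (K ⋙ Functor.sigma G).sections) :
    ∃ (i : I) (t : (K ⋙ G i).sections), ∀ j, s j = ⟨i, t.1 j⟩ := by
  obtain ⟨j₀⟩ := IsConnected.is_nonempty (J := J)
  have hfst (j : J) : (s j).1 = (s j₀).1 :=
    constant_of_preserves_morphisms (fun j => (s j).1)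
      (fun _ _ f => congrArg Sigma.fst (hs f)) j j₀
  have hmk (j : J) : ∃ y, s j = ⟨(s j₀).1, y⟩ := by
    rw [← hfst j]
    exact ⟨_, rfl⟩
  choose t ht using hmk
  refine ⟨(s j₀).1, ⟨t, fun {j j'} f => ?_⟩, ht⟩
  have h := hs f
  rw [ht j, ht j'] at h
  exact eq_of_heq (Sigma.mk.inj h).2

instance Functor.preservesLimitsOfShape_sigma (J : Type*) [Category J] [IsConnected J]
    [∀ i, PreservesLimitsOfShape J (G i)] : PreservesLimitsOfShape J (Functor.sigma G) where
  preservesLimit {K} := ⟨fun {c} hc => by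
    rw [Types.isLimit_iff]
    intro s hs
    obtain ⟨i, t, hst⟩ := Functor.exists_eq_sigma_mk_of_mem_sections G hs
    obtain ⟨x, hx, hx_uniq⟩ :=
      (Types.isLimit_iff _).mp ⟨isLimitOfPreserves (G i) hc⟩ t.1 t.2
    refine ⟨⟨i, x⟩, fun j => by rw [hst j, ← hx j]; rfl, ?_⟩
    rintro ⟨i', x'⟩ hx'
    obtain ⟨j₀⟩ := IsConnected.is_nonempty (J := J)
    obtain rfl : i' = i := congrArg Sigma.fst ((hx' j₀).trans (hst j₀))
    exact congrArg _ (hx_uniq x' fun j => eq_of_heq (Sigma.mk.inj ((hx' j).trans (hst j))).2)⟩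

end Sigma

section Fiber

variable (F : Type u ⥤ Type u)

def Functor.fiber (i : F.obj PUnit) : Type u ⥤ Type u where
  obj X := {y : F.obj X // F.map (TypeCat.ofHom fun _ => PUnit.unit) y = i}
  map f := TypeCat.ofHom fun y => ⟨F.map f y.1, (F.map_comp_apply f _ y.1).symm.trans y.2⟩

def Functor.isoSigmaFiber : F ≅ Functor.sigma F.fiber :=
  NatIso.ofComponents
    (fun _ => (Equiv.sigmaFiberEquiv _).symm.toIso)
    (fun f => by
      ext y
      refine Sigma.subtype_ext ?_ rfl
      exact (F.map_comp_apply f _ y).symm)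

variable {J : Type*} [Category J]

def Limits.Cone.withTerminalPUnit {K : J ⥤ Type u} (c : Cone K) :
    Cone (WithTerminal.liftToTerminal K Types.isTerminalPUnit) where
  pt := c.pt
  π :=
    { app
        | .of j => c.π.app j
        | .star => Types.isTerminalPUnit.from c.pt
      naturality := by
        rintro (j | _) (j' | _) f
        · exact c.π.naturality f
        · rfl
        · exact (f : PEmpty).elim
        · rfl }

theorem Limits.IsLimit.nonempty_isLimit_withTerminalPUnit {K : J ⥤ Type u} {c : Cone K}
    (hc : IsLimit c) : Nonempty (IsLimit c.withTerminalPUnit) := by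
  rw [Types.isLimit_iff]
  intro s hs
  obtain ⟨x, hx, hx_uniq⟩ :=
    (Types.isLimit_iff c).mp ⟨hc⟩ (fun j => s (.of j)) fun f => hs (j := .of _) (j' := .of _) f
  refine ⟨x, ?_, fun y hy => hx_uniq y fun j => hy (.of j)⟩
  rintro (j | _)
  · exact hx j
  · rfl

theorem Functor.preservesLimitsOfShape_fiber [PreservesLimitsOfShape (WithTerminal J) F]
    (i : F.obj PUnit) : PreservesLimitsOfShape J (F.fiber i) where
  preservesLimit {K} := ⟨fun {c} hc => by
    rw [Types.isLimit_iff]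
    intro s hs
    let s' : ∀ x, (WithTerminal.liftToTerminal K Types.isTerminalPUnit ⋙ F).obj x
      | .of j => (s j).1
      | .star => i
    have hs' : s' ∈ (WithTerminal.liftToTerminal K Types.isTerminalPUnit ⋙ F).sections := by
      rintro (j | _) (j' | _) f
      · exact congrArg Subtype.val (hs f)
      · exact (s j).2
      · exact (f : PEmpty).elim
      · exact F.map_id_apply PUnit i
    obtain ⟨x, hx, hx_uniq⟩ := (Types.isLimit_iff _).mp
      ⟨isLimitOfPreserves F hc.nonempty_isLimit_withTerminalPUnit.some⟩ s' hs'
    refine ⟨⟨x, hx .star⟩, fun j => Subtype.ext (hx (.of j)), fun y hy => Subtype.ext ?_⟩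
    refine hx_uniq y.1 ?_
    rintro (j | _)
    · exact congrArg Subtype.val (hy j)
    · exact y.2⟩

end Fiber

theorem isCoseparator_uliftProp : IsCoseparator (ULift.{u} Prop) := by
  refine (isCoseparator_def _).2 fun X Y f g h => ?_
  ext x
  -- test `f` and `g` against the characteristic map of `{f x}`
  have := congrArg ULift.down
    (ConcreteCategory.congr_hom (h (TypeCat.ofHom fun y => ⟨y = f x⟩)) x)
  exact (cast this rfl).symm

theorem Functor.isCorepresentable_of_preservesLimits (G : Type u ⥤ Type u) [PreservesLimits G] :
    G.IsCorepresentable := by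
  have := isRightAdjoint_of_preservesLimits_of_isCoseparating isCoseparator_uliftProp G
  have := ((Adjunction.ofIsRightAdjoint G).corepresentableBy PUnit).isCorepresentable
  exact corepresentable_of_natIso _ (isoWhiskerLeft G Coyoneda.punitIso ≪≫ G.rightUnitor)

end CategoryTheory

def PFunctor.toFunctorIsoSigma (P : PFunctor.{u}) :
    P.toFunctor ≅ Functor.sigma fun a => coyoneda.obj (Opposite.op (P.B a)) :=
  NatIso.ofComponents
    (fun _ => (Equiv.sigmaCongrRight fun _ => TypeCat.homEquiv.symm).toIso)
    (fun _ => rfl)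

/-- a functor `Set → Set` preserves connected limits iff it is
(isomorphic to) a polynomial functor, i.e. a coproduct of representables. -/
theorem preservesConnectedLimits_iff_polynomial (F : Type u ⥤ Type u) :
    (∀ (J : Type u) [SmallCategory J] [IsConnected J],
        Nonempty (PreservesLimitsOfShape J F)) ↔
      ∃ P : PFunctor.{u}, Nonempty (F ≅ P.toFunctor) := by
  constructor
  · intro hF
    have (i : F.obj PUnit) : (F.fiber i).IsCorepresentable := by
      have : PreservesLimits (F.fiber i) := ⟨fun {J} _ => by
        have : IsConnected (WithTerminal J) := isConnected_of_hasTerminal _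
        have := (hF (WithTerminal J)).some
        exact F.preservesLimitsOfShape_fiber i⟩
      exact (F.fiber i).isCorepresentable_of_preservesLimits
    let P : PFunctor.{u} := ⟨F.obj PUnit, fun i => (F.fiber i).coreprX⟩
    exact ⟨P, ⟨F.isoSigmaFiber ≪≫ Functor.sigmaMapIso _ (fun i => (F.fiber i).coreprW.symm) ≪≫
      P.toFunctorIsoSigma.symm⟩⟩
  · rintro ⟨P, ⟨e⟩⟩ J _ _
    exact ⟨preservesLimitsOfShape_of_natIso (e ≪≫ P.toFunctorIsoSigma).symm⟩
end

section
/- If e → p ⇉ q is an equalizer diagram of polynomial functors (computed pointwise), then for any polynomial functor r, both (e ∘ r) → (p ∘ r) ⇉ (q ∘ r) and (r ∘ e) → (r ∘ p) ⇉ (r ∘ q) are equalizer diagrams. -/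
/-!
Precomposing with `r` changes nothing: at `X` the diagram `e ◁ r → p ◁ r ⇉ q ◁ r` is the given
equalizer at `r X`. Postcomposition uses that an element `⟨a, h⟩` of `r (p X)` is determined by
its shape `a` and its positions `h`: so `r.map ι` is injective, and `r.map f`, `r.map g` agree
at `⟨a, h⟩` iff `f` and `g` agree at every `h b`, i.e. iff every `h b` lies in the range of `ι`,
i.e. iff `⟨a, h⟩` lies in the range of `r.map ι`.
-/

def IsTypeEqualizer {E A B : Type*} (ι : E → A) (f g : A → B) : Prop :=
  Function.Injective ι ∧ ∀ y, f y = g y ↔ ∃ x, ι x = y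

namespace PFunctor

variable (P : PFunctor) {α β γ : Type*}

theorem map_injective {k : α → β} (hk : Function.Injective k) :
    Function.Injective (P.map k) := by
  rintro ⟨a, h₁⟩ ⟨a', h₂⟩ hmap
  obtain ⟨rfl, hcomp⟩ := Sigma.mk.inj_iff.mp hmap
  rw [hk.comp_left (eq_of_heq hcomp)]

theorem map_eq_map_iff (f g : β → γ) (x : P β) :
    P.map f x = P.map g x ↔ ∀ b, f (x.2 b) = g (x.2 b) := by
  obtain ⟨a, h⟩ := x
  exact ⟨fun hx => congrFun (eq_of_heq (Sigma.mk.inj_iff.mp hx).2),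
    fun hfg => congrArg (Sigma.mk a) (funext hfg)⟩

theorem exists_map_eq_iff (k : α → β) (y : P β) :
    (∃ x, P.map k x = y) ↔ ∀ b, ∃ x, k x = y.2 b := by
  obtain ⟨a, h⟩ := y
  constructor
  · rintro ⟨⟨a', w⟩, hx⟩
    obtain ⟨rfl, hcomp⟩ := Sigma.mk.inj_iff.mp hx
    exact fun b => ⟨w b, congrFun (eq_of_heq hcomp) b⟩
  · intro hpos
    choose w hw using hpos
    exact ⟨⟨a, w⟩, congrArg (Sigma.mk a) (funext hw)⟩

theorem isTypeEqualizer_map {ι : α → β} {f g : β → γ} (h : IsTypeEqualizer ι f g) :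
    IsTypeEqualizer (P.map ι) (P.map f) (P.map g) := by
  refine ⟨P.map_injective h.1, fun y => ?_⟩
  rw [map_eq_map_iff, exists_map_eq_iff]
  exact forall_congr' fun b => h.2 (y.2 b)

end PFunctor

theorem comp_preserves_equalizers_general (e p q r : PFunctor.{u})
    (ι : ∀ X : Type u, e.Obj X → p.Obj X)
    (f g : ∀ X : Type u, p.Obj X → q.Obj X)
    (heq : ∀ X : Type u, Function.Injective (ι X) ∧
      ∀ y : p.Obj X, f X y = g X y ↔ ∃ x, ι X x = y) :
    (∀ X : Type u, Function.Injective (ι (r.Obj X)) ∧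
       ∀ y : p.Obj (r.Obj X),
         f (r.Obj X) y = g (r.Obj X) y ↔ ∃ x, ι (r.Obj X) x = y) ∧
    (∀ X : Type u, Function.Injective (r.map (ι X)) ∧
       ∀ y : r.Obj (p.Obj X),
         r.map (f X) y = r.map (g X) y ↔ ∃ x, r.map (ι X) x = y) :=
  ⟨fun X => heq (r.Obj X), fun X => r.isTypeEqualizer_map (heq X)⟩

/-- if `e → p ⇉ q` is a (pointwise) equalizer diagram of polynomial
functors, then composing with any polynomial functor `r` on either side again
yields a (pointwise) equalizer diagram: `e◁r → p◁r ⇉ q◁r` and `r◁e → r◁p ⇉ r◁q`.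
A pointwise equalizer in `Set` is an injection whose image is the set where the
two parallel maps agree. -/
theorem comp_preserves_equalizers (e p q r : PFunctor.{u})
    (ι : ∀ X : Type u, e.Obj X → p.Obj X)
    (f g : ∀ X : Type u, p.Obj X → q.Obj X)
    (hι : ∀ (X Y : Type u) (k : X → Y) (x : e.Obj X),
      ι Y (e.map k x) = p.map k (ι X x))
    (hf : ∀ (X Y : Type u) (k : X → Y) (x : p.Obj X),
      f Y (p.map k x) = q.map k (f X x))
    (hg : ∀ (X Y : Type u) (k : X → Y) (x : p.Obj X),
      g Y (p.map k x) = q.map k (g X x))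
    (heq : ∀ X : Type u, Function.Injective (ι X) ∧
      ∀ y : p.Obj X, f X y = g X y ↔ ∃ x, ι X x = y) :
    (∀ X : Type u, Function.Injective (ι (r.Obj X)) ∧
       ∀ y : p.Obj (r.Obj X),
         f (r.Obj X) y = g (r.Obj X) y ↔ ∃ x, ι (r.Obj X) x = y) ∧
    (∀ X : Type u, Function.Injective (r.map (ι X)) ∧
       ∀ y : r.Obj (p.Obj X),
         r.map (f X) y = r.map (g X) y ↔ ∃ x, r.map (ι X) x = y) :=
  comp_preserves_equalizers_general e p q r ι f g heq
end

section
/- There is a natural duoidal interchange map (p ◁ q) ⊗ (p' ◁ q') → (p ⊗ p') ◁ (q ⊗ q') of polynomial functors, where ◁ is composition of polynomial functors and ⊗ is the Dirichlet product. -/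
universe u

/-- The Dirichlet product `p ⊗ q`. -/
def tens (p q : PFunctor.{u, u}) : PFunctor.{u, u} :=
  ⟨p.A × q.A, fun ij => p.B ij.1 × q.B ij.2⟩

/-- Morphisms of polynomial functors in combinatorial form. -/
def PHom (p q : PFunctor.{u, u}) : Type u :=
  Σ f : p.A → q.A, ∀ i : p.A, q.B (f i) → p.B i

/-- Composition of morphisms of polynomial functors. -/
def PHom.comp {p q r : PFunctor.{u, u}} (φ : PHom p q) (ψ : PHom q r) : PHom p r :=
  ⟨fun i => ψ.1 (φ.1 i), fun i d => φ.2 i (ψ.2 (φ.1 i) d)⟩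

/-- The Dirichlet product of two morphisms. -/
def tensHom {p p' q q' : PFunctor.{u, u}} (f : PHom p p') (g : PHom q q') :
    PHom (tens p q) (tens p' q') :=
  ⟨fun ij => (f.1 ij.1, g.1 ij.2), fun ij d => (f.2 ij.1 d.1, g.2 ij.2 d.2)⟩

/-- The composition product (`◁`, i.e. `PFunctor.comp`) of two morphisms. -/
def compHom {p p' q q' : PFunctor.{u, u}} (f : PHom p p') (g : PHom q q') :
    PHom (p.comp q) (p'.comp q') :=
  ⟨fun aj => ⟨f.1 aj.1, fun d' => g.1 (aj.2 (f.2 aj.1 d'))⟩,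
   fun aj uv => ⟨f.2 aj.1 uv.1, g.2 (aj.2 (f.2 aj.1 uv.1)) uv.2⟩⟩

/-- Pair the two outer positions and label each pair of directions `(d, d')` by the pair of
inner positions; on directions the map is the shuffle `((d, d'), (e, e')) ↦ ((d, e), (d', e'))`. -/
def interchange (p q p' q' : PFunctor.{u, u}) :
    PHom (tens (p.comp q) (p'.comp q')) ((tens p p').comp (tens q q')) :=
  ⟨fun x => ⟨(x.1.1, x.2.1), fun d => (x.1.2 d.1, x.2.2 d.2)⟩,
   fun _ e => (⟨e.1.1, e.2.1⟩, ⟨e.1.2, e.2.2⟩)⟩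

theorem interchange_naturality {p₁ p₂ q₁ q₂ p₁' p₂' q₁' q₂' : PFunctor.{u, u}}
    (f : PHom p₁ p₂) (g : PHom q₁ q₂) (f' : PHom p₁' p₂') (g' : PHom q₁' q₂') :
    (tensHom (compHom f g) (compHom f' g')).comp (interchange p₂ q₂ p₂' q₂') =
      (interchange p₁ q₁ p₁' q₁').comp (compHom (tensHom f f') (tensHom g g')) :=
  rfl

/-- there is a duoidal interchange morphism
`(p ◁ q) ⊗ (p' ◁ q') → (p ⊗ p') ◁ (q ⊗ q')`, natural in all four variables. -/
theorem duoidal_interchange :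
    ∃ θ : ∀ p q p' q' : PFunctor.{u, u},
        PHom (tens (p.comp q) (p'.comp q')) ((tens p p').comp (tens q q')),
      ∀ (p₁ p₂ q₁ q₂ p₁' p₂' q₁' q₂' : PFunctor.{u, u})
        (f : PHom p₁ p₂) (g : PHom q₁ q₂) (f' : PHom p₁' p₂') (g' : PHom q₁' q₂'),
        PHom.comp (tensHom (compHom f g) (compHom f' g')) (θ p₂ q₂ p₂' q₂') =
          PHom.comp (θ p₁ q₁ p₁' q₁') (compHom (tensHom f f') (tensHom g g')) :=
  ⟨interchange, fun _ _ _ _ _ _ _ _ => interchange_naturality⟩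
end

section
/- Composition of polynomial functors admits a coclosure: for polynomials p, q define ⟨p|q⟩ := Σ_{i∈p(1)} y^{q(p[i])}. Then there is a natural bijection between morphisms p → p' ◁ q and morphisms ⟨p|q⟩ → p' of polynomial functors. -/
/-!
Over a position `i` of `p`, a morphism `p → p' ◁ q` chooses a position `a` of `p'` and, for each
direction `b'` of `p'` at `a`, a position `j` of `q` together with a map `q[j] → p[i]`. The pair
`(j, q[j] → p[i])` is an element of `q(p[i])`, a direction of `⟨p|q⟩` at `i`, so the same data is
a morphism `⟨p|q⟩ → p'`. Both directions of the bijection, and naturality in `p'`, hold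
definitionally.
-/

universe u

/-- The identity morphism. -/
def PHom.id (p : PFunctor.{u, u}) : PHom p p := ⟨fun i => i, fun _ d => d⟩

/-- The coclosure `⟨p|q⟩ := Σ_{i ∈ p(1)} y^{q(p[i])}`. -/
def coclos (p q : PFunctor.{u, u}) : PFunctor.{u, u} :=
  ⟨p.A, fun i => q.Obj (p.B i)⟩

def coclosureEquiv (p q p' : PFunctor.{u, u}) : PHom p (p'.comp q) ≃ PHom (coclos p q) p' where
  toFun φ := ⟨fun i => (φ.1 i).1, fun i b' => ⟨(φ.1 i).2 b', fun d => φ.2 i ⟨b', d⟩⟩⟩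
  invFun ψ := ⟨fun i => ⟨ψ.1 i, fun b' => (ψ.2 i b').1⟩, fun i bd => (ψ.2 i bd.1).2 bd.2⟩
  left_inv _ := rfl
  right_inv _ := rfl

theorem coclosureEquiv_comp_compHom_id {p q p' p'' : PFunctor.{u, u}}
    (φ : PHom p (p'.comp q)) (g : PHom p' p'') :
    coclosureEquiv p q p'' (φ.comp (compHom g (PHom.id q))) =
      (coclosureEquiv p q p' φ).comp g :=
  rfl

/-- composition of polynomial functors has a coclosure: morphisms
`p → p' ◁ q` are in bijection with morphisms `⟨p|q⟩ → p'`, naturally in `p'`. -/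
theorem comp_coclosure :
    ∃ e : ∀ p q p' : PFunctor.{u, u}, PHom p (p'.comp q) ≃ PHom (coclos p q) p',
      ∀ (p q p' p'' : PFunctor.{u, u}) (φ : PHom p (p'.comp q)) (g : PHom p' p''),
        e p q p'' (PHom.comp φ (compHom g (PHom.id q))) =
          PHom.comp (e p q p' φ) g :=
  ⟨coclosureEquiv, fun _ _ _ _ => coclosureEquiv_comp_compHom_id⟩
end

section
/- For any polynomial functor p, the polynomial ⟨p|p⟩ := Σ_{i∈p(1)} y^{p(p[i])} carries a natural comonoid structure for the composition monoidal structure (y, ◁) on polynomial functors, with counit and comultiplication induced by the coclosure adjunction Poly(p, p' ◁ q) ≅ Poly(⟨p|q⟩, p'). -/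
/-!
A position of `⟨p|p⟩` is a position `i` of `p`, and a direction there is a pair `⟨j, f⟩` with
`f : p[j] → p[i]`. The counit picks the identity direction `⟨i, id⟩` and the comultiplication
composes directions, so counitality and coassociativity are the identity and associativity laws
of function composition and hold definitionally, as does naturality.
-/

universe u

/-- A comonoid structure on a polynomial functor `c` for the composition monoidal
structure `(y, ◁)`, presented as a comonad structure on the underlying
endofunctor (counit `c → y` and comultiplication `c → c ◁ c` as natural
transformations, satisfying counitality and coassociativity). -/
structure PolyComonoid (c : PFunctor.{u, u}) where
  ε : ∀ X : Type u, c.Obj X → X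
  δ : ∀ X : Type u, c.Obj X → c.Obj (c.Obj X)
  ε_natural : ∀ {X Y : Type u} (f : X → Y) (x : c.Obj X), f (ε X x) = ε Y (c.map f x)
  δ_natural : ∀ {X Y : Type u} (f : X → Y) (x : c.Obj X),
    c.map (c.map f) (δ X x) = δ Y (c.map f x)
  counit_outer : ∀ (X : Type u) (x : c.Obj X), ε (c.Obj X) (δ X x) = x
  counit_inner : ∀ (X : Type u) (x : c.Obj X), c.map (ε X) (δ X x) = x
  coassoc : ∀ (X : Type u) (x : c.Obj X), c.map (δ X) (δ X x) = δ (c.Obj X) (δ X x)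

def coclosSelfComonoid (p : PFunctor.{u, u}) : PolyComonoid (coclos p p) where
  ε _ x := x.2 ⟨x.1, id⟩
  δ _ x := ⟨x.1, fun jm => ⟨jm.1, fun ln => x.2 ⟨ln.1, jm.2 ∘ ln.2⟩⟩⟩
  ε_natural _ _ := rfl
  δ_natural _ _ := rfl
  counit_outer _ _ := rfl
  counit_inner _ _ := rfl
  coassoc _ _ := rfl

/-- for any polynomial functor `p`, the coclosure `⟨p|p⟩` carries a
natural comonoid structure for `(y, ◁)`, whose counit and comultiplication are
the ones induced by the coclosure adjunction (counit given by evaluating at the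
identity direction, comultiplication by composing directions). -/
theorem coclos_self_comonoid (p : PFunctor.{u, u}) :
    ∃ M : PolyComonoid (coclos p p),
      (∀ (X : Type u) (x : (coclos p p).Obj X),
        M.ε X x = x.2 ⟨x.1, fun d => d⟩) ∧
      (∀ (X : Type u) (x : (coclos p p).Obj X),
        M.δ X x = ⟨x.1, fun jm => ⟨jm.1, fun ln => x.2 ⟨ln.1, jm.2 ∘ ln.2⟩⟩⟩) :=
  ⟨coclosSelfComonoid p, fun _ _ => rfl, fun _ _ => rfl⟩
end

section
/- Let c be a polynomial comonad (a small category) with carrier c = Σ_{a} y^{c[a]}. Then left c-comodule structures on a constant polynomial M (maps λ : M → c ◁ M satisfying the comodule laws) correspond exactly to copresheaves X : c → Set together with an identification of M with the set of elements of X; i.e. the category of (c, 0)-bicomodules is equivalent to the copresheaf category c-Set. Moreover the carrier of any (c,0)-bicomodule is necessarily a constant polynomial. -/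
universe u

open CategoryTheory

/-- A small category structure on the polynomial `c` (objects `c.A`, outfacing
morphisms `c.B a`). -/
structure PolyCatStruct (c : PFunctor.{u, u}) where
  cod : ∀ a : c.A, c.B a → c.A
  ident : ∀ a : c.A, c.B a
  comp : ∀ (a : c.A) (f : c.B a), c.B (cod a f) → c.B a
  cod_ident : ∀ a : c.A, cod a (ident a) = a
  cod_comp : ∀ (a : c.A) (f : c.B a) (g : c.B (cod a f)),
    cod a (comp a f g) = cod (cod a f) g
  ident_comp : ∀ (a : c.A) (f : c.B a),
    comp a (ident a) ((cod_ident a).symm ▸ f) = f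
  comp_ident : ∀ (a : c.A) (f : c.B a), comp a f (ident (cod a f)) = f
  assoc : ∀ (a : c.A) (f : c.B a) (g : c.B (cod a f)) (h : c.B (cod (cod a f) g)),
    comp a (comp a f g) ((cod_comp a f g).symm ▸ h) = comp a f (comp (cod a f) g h)

/-- A left `c`-comodule with constant carrier `M`, i.e. a `(c,0)`-bicomodule:
a coaction `M → c ◁ M` satisfying the comodule laws. -/
structure PolyComod {c : PFunctor.{u, u}} (Mc : PolyComonoid c) where
  M : Type u
  co : M → c.Obj M
  counit : ∀ m : M, Mc.ε M (co m) = m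
  coassoc : ∀ m : M, c.map co (co m) = Mc.δ M (co m)

/-- A morphism of comodules. -/
structure PolyComodHom {c : PFunctor.{u, u}} {Mc : PolyComonoid c}
    (P Q : PolyComod Mc) where
  h : P.M → Q.M
  compat : ∀ m : P.M, c.map h (P.co m) = Q.co (h m)

instance {c : PFunctor.{u, u}} (Mc : PolyComonoid c) : Category (PolyComod Mc) where
  Hom := PolyComodHom
  id P := ⟨fun m => m, fun m => by
    have : (fun m => m : P.M → P.M) = id := rfl
    rw [this, c.id_map]⟩
  comp f g := ⟨fun m => g.h (f.h m), fun m => by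
    have : (fun m => g.h (f.h m)) = g.h ∘ f.h := rfl
    rw [this, ← PFunctor.map_map, f.compat, g.compat]⟩
  id_comp := by intros; rfl
  comp_id := by intros; rfl
  assoc := by intros; rfl

/-- A copresheaf on the category presented by `C`. -/
structure PolyCopresheaf {c : PFunctor.{u, u}} (C : PolyCatStruct c) where
  X : c.A → Type u
  act : ∀ (a : c.A) (f : c.B a), X a → X (C.cod a f)
  act_ident : ∀ (a : c.A) (x : X a), (C.cod_ident a) ▸ act a (C.ident a) x = x
  act_comp : ∀ (a : c.A) (f : c.B a) (g : c.B (C.cod a f)) (x : X a),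
    act (C.cod a f) g (act a f x) = (C.cod_comp a f g) ▸ act a (C.comp a f g) x

/-- A morphism of copresheaves. -/
structure PolyCopresheafHom {c : PFunctor.{u, u}} {C : PolyCatStruct c}
    (P Q : PolyCopresheaf C) where
  h : ∀ a : c.A, P.X a → Q.X a
  compat : ∀ (a : c.A) (f : c.B a) (x : P.X a),
    h (C.cod a f) (P.act a f x) = Q.act a f (h a x)

instance {c : PFunctor.{u, u}} (C : PolyCatStruct c) : Category (PolyCopresheaf C) where
  Hom := PolyCopresheafHom
  id P := ⟨fun _ x => x, fun _ _ _ => rfl⟩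
  comp f g := ⟨fun a x => g.h a (f.h a x), fun a fm x => by
    rw [f.compat, g.compat]⟩
  id_comp := by intros; rfl
  comp_id := by intros; rfl
  assoc := by intros; rfl

/-- The zero polynomial (the comonad `0`). -/
def zP : PFunctor.{u, u} := ⟨PEmpty, fun _ => PEmpty⟩

/-!
By naturality, `ε` and `δ` are determined by their values on the generic element `⟨a, id⟩` of
`c (c[a])`. These values give, for every object `a`, an identity `ε ⟨a, id⟩ : c[a]` and, for every
`f : c[a]`, a codomain together with post-composition `c[cod f] → c[a]`; the comonoid laws become
the category laws (Ahman–Uustalu).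

A comodule `M → c ◁ M` sends each `m` to an object `a` and each `f : c[a]` to a new element; the
comodule laws say exactly that the fibres over the objects form a copresheaf with this action, and
conversely the set of elements of a copresheaf carries such a coaction.

A right `0`-coaction sends the generic element of `m (m[i])` into `m ◁ 0`, whose directions are
empty; the counit law forces its position to be `i`, so `m[i]` is empty.
-/

section Transport

variable {c : PFunctor.{u, u}} {X : Type u}

theorem PFunctor.Obj.snd_eqRec_of_eq_mk {p : c.Obj X} {a : c.A} {k : c.B a → X}
    (h : p = ⟨a, k⟩) (h' : a = p.1) (f : c.B a) : p.2 (h' ▸ f) = k f := by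
  subst h; rfl

theorem PFunctor.Obj.mk_eq_mk {a b : c.A} (h : a = b) {k : c.B a → X} {l : c.B b → X}
    (hkl : ∀ f, k f = l (h ▸ f)) : (⟨a, k⟩ : c.Obj X) = ⟨b, l⟩ := by
  subst h; exact congrArg _ (funext hkl)

theorem PFunctor.map_eq_mk_of_fst_eq {Y : Type u} (g : X → Y) (p : c.Obj X) {a : c.A}
    (h : p.1 = a) : c.map g p = ⟨a, fun f => g (p.2 (h.symm ▸ f))⟩ := by
  obtain ⟨b, k⟩ := p
  subst h; rfl

theorem Subtype.val_eqRec {β γ : Type*} {pr : β → γ} {a b : γ} (h : a = b)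
    (x : {m // pr m = a}) : (h ▸ x : {m // pr m = b}).1 = x.1 := by
  subst h; rfl

end Transport

namespace PolyComonoid

variable {c : PFunctor.{u, u}} (Mc : PolyComonoid c)

def ident (a : c.A) : c.B a := Mc.ε (c.B a) ⟨a, id⟩

theorem ε_eq {X : Type u} (x : c.Obj X) : Mc.ε X x = x.2 (Mc.ident x.1) :=
  (Mc.ε_natural x.2 ⟨x.1, id⟩).symm

theorem fst_δ_generic (a : c.A) : (Mc.δ (c.B a) ⟨a, id⟩).1 = a :=
  congrArg Sigma.fst (Mc.counit_inner (c.B a) ⟨a, id⟩)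

/-- The codomain of `f` together with post-composition by `f`. -/
def codComp (a : c.A) (f : c.B a) : c.Obj (c.B a) :=
  (Mc.δ (c.B a) ⟨a, id⟩).2 ((Mc.fst_δ_generic a).symm ▸ f)

theorem δ_eq {X : Type u} (x : c.Obj X) :
    Mc.δ X x = ⟨x.1, fun f => c.map x.2 (Mc.codComp x.1 f)⟩ :=
  (Mc.δ_natural x.2 ⟨x.1, id⟩).symm.trans
    (PFunctor.map_eq_mk_of_fst_eq _ _ (Mc.fst_δ_generic x.1))

theorem δ_generic (a : c.A) : Mc.δ (c.B a) ⟨a, id⟩ = ⟨a, Mc.codComp a⟩ :=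
  Mc.δ_eq ⟨a, id⟩

theorem snd_ident_codComp (a : c.A) (f : c.B a) :
    (Mc.codComp a f).2 (Mc.ident (Mc.codComp a f).1) = f := by
  have h := Mc.counit_inner (c.B a) ⟨a, id⟩
  rw [δ_generic] at h
  exact (Mc.ε_eq _).symm.trans (congrFun (sigma_mk_injective h) f)

theorem codComp_ident (a : c.A) : Mc.codComp a (Mc.ident a) = ⟨a, id⟩ := by
  have h := Mc.counit_outer (c.B a) ⟨a, id⟩
  rw [δ_generic] at h
  exact (Mc.ε_eq _).symm.trans h

theorem co_snd_of_map_co {M : Type u} {co : M → c.Obj M} {x : c.Obj M}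
    (h : c.map co x = Mc.δ M x) (f : c.B x.1) :
    co (x.2 f) = c.map x.2 (Mc.codComp x.1 f) := by
  rw [δ_eq] at h
  exact congrFun (sigma_mk_injective h) f

theorem codComp_snd_codComp (a : c.A) (f : c.B a) (g : c.B (Mc.codComp a f).1) :
    Mc.codComp a ((Mc.codComp a f).2 g) =
      c.map (Mc.codComp a f).2 (Mc.codComp (Mc.codComp a f).1 g) := by
  have h := Mc.coassoc (c.B a) ⟨a, id⟩
  rw [δ_generic] at h
  have hf := Mc.co_snd_of_map_co h f
  rw [δ_eq] at hf
  exact (congrFun (sigma_mk_injective hf) g).symm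

def toCatStruct : PolyCatStruct c where
  cod a f := (Mc.codComp a f).1
  ident := Mc.ident
  comp a f := (Mc.codComp a f).2
  cod_ident a := congrArg Sigma.fst (Mc.codComp_ident a)
  cod_comp a f g := congrArg Sigma.fst (Mc.codComp_snd_codComp a f g)
  ident_comp a := PFunctor.Obj.snd_eqRec_of_eq_mk (Mc.codComp_ident a) _
  comp_ident := Mc.snd_ident_codComp
  assoc a f g := PFunctor.Obj.snd_eqRec_of_eq_mk (Mc.codComp_snd_codComp a f g) _

end PolyComonoid

def PolyCatStruct.toComonoid {c : PFunctor.{u, u}} (C : PolyCatStruct c) : PolyComonoid c where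
  ε _ x := x.2 (C.ident x.1)
  δ _ x := ⟨x.1, fun f => ⟨C.cod x.1 f, fun g => x.2 (C.comp x.1 f g)⟩⟩
  ε_natural _ _ := rfl
  δ_natural _ _ := rfl
  counit_outer _ x :=
    (PFunctor.Obj.mk_eq_mk (C.cod_ident x.1).symm fun f => by rw [C.ident_comp]).symm
  counit_inner _ x := congrArg (Sigma.mk x.1) (funext fun f => congrArg x.2 (C.comp_ident x.1 f))
  coassoc _ x := congrArg (Sigma.mk x.1) <| funext fun f => congrArg (Sigma.mk _) <| funext fun g =>
    PFunctor.Obj.mk_eq_mk (C.cod_comp x.1 f g).symm fun h => congrArg x.2 (C.assoc x.1 f g h).symm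

theorem PolyComonoid.ext_of_ε_δ {c : PFunctor.{u, u}} {M N : PolyComonoid c} (hε : M.ε = N.ε)
    (hδ : M.δ = N.δ) : M = N := by
  cases M; cases N; cases hε; cases hδ; rfl

def PolyComonoid.equivCatStruct (c : PFunctor.{u, u}) : PolyComonoid c ≃ PolyCatStruct c where
  toFun := PolyComonoid.toCatStruct
  invFun := PolyCatStruct.toComonoid
  left_inv Mc := PolyComonoid.ext_of_ε_δ (funext fun _ => funext fun x => (Mc.ε_eq x).symm)
    (funext fun _ => funext fun x => (Mc.δ_eq x).symm)
  right_inv _ := rfl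

section Isos

variable {c : PFunctor.{u, u}} {Mc : PolyComonoid c} {C : PolyCatStruct c}

theorem PolyComodHom.ext_of_h {P Q : PolyComod Mc} {φ ψ : PolyComodHom P Q} (h : φ.h = ψ.h) :
    φ = ψ := by
  cases φ; cases ψ; cases h; rfl

theorem PolyCopresheafHom.ext_of_h {P Q : PolyCopresheaf C} {φ ψ : PolyCopresheafHom P Q}
    (h : φ.h = ψ.h) : φ = ψ := by
  cases φ; cases ψ; cases h; rfl

def PolyComod.isoOfEquiv {P Q : PolyComod Mc} (e : P.M ≃ Q.M)
    (he : ∀ m, c.map e (P.co m) = Q.co (e m)) : P ≅ Q where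
  hom := ⟨e, he⟩
  inv := ⟨e.symm, fun n => by
    conv_lhs => rw [← e.apply_symm_apply n, ← he, PFunctor.map_map, e.symm_comp_self, c.id_map]⟩
  hom_inv_id := PolyComodHom.ext_of_h (funext e.symm_apply_apply)
  inv_hom_id := PolyComodHom.ext_of_h (funext e.apply_symm_apply)

def PolyCopresheaf.isoOfEquiv {X Y : PolyCopresheaf C} (e : ∀ a, X.X a ≃ Y.X a)
    (he : ∀ a f x, e _ (X.act a f x) = Y.act a f (e a x)) : X ≅ Y where
  hom := ⟨fun a => e a, he⟩
  inv := ⟨fun a => (e a).symm, fun a f y => by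
    rw [Equiv.symm_apply_eq, he, Equiv.apply_symm_apply]⟩
  hom_inv_id := PolyCopresheafHom.ext_of_h (funext fun a => funext (e a).symm_apply_apply)
  inv_hom_id := PolyCopresheafHom.ext_of_h (funext fun a => funext (e a).apply_symm_apply)

end Isos

namespace PolyComod

variable {c : PFunctor.{u, u}} {Mc : PolyComonoid c}

theorem co_snd (P : PolyComod Mc) (m : P.M) (f : c.B (P.co m).1) :
    P.co ((P.co m).2 f) = c.map (P.co m).2 (Mc.codComp (P.co m).1 f) :=
  Mc.co_snd_of_map_co (P.coassoc m) f

theorem snd_ident (P : PolyComod Mc) (m : P.M) : (P.co m).2 (Mc.ident (P.co m).1) = m :=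
  (Mc.ε_eq _).symm.trans (P.counit m)

def toCopresheaf (P : PolyComod Mc) : PolyCopresheaf Mc.toCatStruct where
  X a := {m : P.M // (P.co m).1 = a}
  act a f x := ⟨(P.co x.1).2 (x.2.symm ▸ f), by
    obtain ⟨m, rfl⟩ := x
    exact congrArg Sigma.fst (P.co_snd m f)⟩
  act_ident a x := by
    obtain ⟨m, rfl⟩ := x
    exact Subtype.ext ((Subtype.val_eqRec _ _).trans (P.snd_ident m))
  act_comp a f g x := by
    obtain ⟨m, rfl⟩ := x
    apply Subtype.ext
    rw [Subtype.val_eqRec]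
    exact PFunctor.Obj.snd_eqRec_of_eq_mk (P.co_snd m f) _ g

def toCopresheafMap {P Q : PolyComod Mc} (φ : PolyComodHom P Q) :
    PolyCopresheafHom P.toCopresheaf Q.toCopresheaf where
  h a x := ⟨φ.h x.1, by
    obtain ⟨m, rfl⟩ := x
    exact (congrArg Sigma.fst (φ.compat m)).symm⟩
  compat a f x := by
    obtain ⟨m, rfl⟩ := x
    exact Subtype.ext (PFunctor.Obj.snd_eqRec_of_eq_mk (φ.compat m).symm _ f).symm

def toCopresheafFunctor : PolyComod Mc ⥤ PolyCopresheaf Mc.toCatStruct where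
  obj := toCopresheaf
  map := toCopresheafMap
  map_id _ := rfl
  map_comp _ _ := rfl

def sigmaFiberEquiv (P : PolyComod Mc) : (Σ a, P.toCopresheaf.X a) ≃ P.M :=
  Equiv.sigmaFiberEquiv fun m => (P.co m).1

end PolyComod

namespace PolyCopresheaf

variable {c : PFunctor.{u, u}} {Mc : PolyComonoid c}

def toComod (X : PolyCopresheaf Mc.toCatStruct) : PolyComod Mc where
  M := Σ a, X.X a
  co p := ⟨p.1, fun f => ⟨Mc.toCatStruct.cod p.1 f, X.act p.1 f p.2⟩⟩
  counit p := (Mc.ε_eq _).trans <|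
    Sigma.ext (Mc.toCatStruct.cod_ident p.1)
      ((eqRec_heq _ _).symm.trans (heq_of_eq (X.act_ident p.1 p.2)))
  coassoc p := by
    refine Eq.trans ?_ (Mc.δ_eq _).symm
    refine congrArg (Sigma.mk p.1) <| funext fun f => congrArg (Sigma.mk _) <| funext fun g => ?_
    exact Sigma.ext (Mc.toCatStruct.cod_comp p.1 f g).symm
      ((eqRec_heq _ _).symm.trans (heq_of_eq (X.act_comp p.1 f g p.2).symm)).symm

def toComodMap {X Y : PolyCopresheaf Mc.toCatStruct} (ψ : PolyCopresheafHom X Y) :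
    PolyComodHom X.toComod Y.toComod where
  h p := ⟨p.1, ψ.h p.1 p.2⟩
  compat p :=
    congrArg (Sigma.mk p.1) <| funext fun f => congrArg (Sigma.mk _) (ψ.compat p.1 f p.2)

def toComodFunctor : PolyCopresheaf Mc.toCatStruct ⥤ PolyComod Mc where
  obj := toComod
  map := toComodMap
  map_id _ := rfl
  map_comp _ _ := rfl

def toComodToCopresheafIso (X : PolyCopresheaf Mc.toCatStruct) :
    X.toComod.toCopresheaf ≅ X :=
  isoOfEquiv Equiv.sigmaSubtype fun a f q => by
    obtain ⟨⟨_, _⟩, rfl⟩ := q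
    rfl

end PolyCopresheaf

namespace PolyComod

variable {c : PFunctor.{u, u}} {Mc : PolyComonoid c}

def isoToCopresheafToComod (P : PolyComod Mc) : P ≅ P.toCopresheaf.toComod :=
  isoOfEquiv P.sigmaFiberEquiv.symm fun _ =>
    congrArg (Sigma.mk _) <| funext fun _ => P.sigmaFiberEquiv.injective rfl

def equivCopresheaf : PolyComod Mc ≌ PolyCopresheaf Mc.toCatStruct :=
  CategoryTheory.Equivalence.mk toCopresheafFunctor PolyCopresheaf.toComodFunctor
    (NatIso.ofComponents isoToCopresheafToComod fun _ =>
      PolyComodHom.ext_of_h (funext fun _ => sigmaFiberEquiv _ |>.injective rfl))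
    (NatIso.ofComponents PolyCopresheaf.toComodToCopresheafIso fun _ =>
      PolyCopresheafHom.ext_of_h (funext fun _ => funext fun q => by
        obtain ⟨⟨_, _⟩, rfl⟩ := q
        rfl))

end PolyComod

instance (X : Type u) : IsEmpty (zP.Obj X) :=
  ⟨fun x => x.1.elim⟩

theorem PFunctor.isEmpty_B_of_map_eq {P : PFunctor} {E X : Type*} [IsEmpty E] {g : E → X}
    {y : P.Obj E} {x : P.Obj X} (h : P.map g y = x) : IsEmpty (P.B x.1) := by
  rw [← h, PFunctor.fst_map]
  exact ⟨fun b => isEmptyElim (y.2 b)⟩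

/-- for a polynomial comonad `c` (with corresponding category
structure), the category of `(c,0)`-bicomodules, i.e. left `c`-comodules with
constant carrier, is equivalent to the category of copresheaves on `c`; the
carrier of a comodule is identified with the set of elements of the
corresponding copresheaf.  Moreover, the carrier of any `(c,0)`-bicomodule is
necessarily constant: any polynomial `m` with a right `0`-comodule structure
has empty direction-sets. -/
theorem comodules_are_copresheaves :
    (∃ e : ∀ c : PFunctor.{u, u}, PolyComonoid c ≃ PolyCatStruct c,
      ∀ (c : PFunctor.{u, u}) (Mc : PolyComonoid c),
        Nonempty (PolyComod Mc ≌ PolyCopresheaf (e c Mc)) ∧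
        ∀ P : PolyComod Mc, ∃ X : PolyCopresheaf (e c Mc),
          Nonempty ((Σ a : c.A, X.X a) ≃ P.M)) ∧
    (∀ (m : PFunctor.{u, u}) (ρ : ∀ X : Type u, m.Obj X → m.Obj (zP.Obj X)),
      (∀ (X : Type u) (x : m.Obj X),
        m.map (fun z : zP.Obj X => PEmpty.elim z.1) (ρ X x) = x) →
      ∀ i : m.A, IsEmpty (m.B i)) := by
  refine ⟨⟨PolyComonoid.equivCatStruct, fun _ _ =>
    ⟨⟨PolyComod.equivCopresheaf⟩, fun P => ⟨P.toCopresheaf, ⟨P.sigmaFiberEquiv⟩⟩⟩⟩, ?_⟩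
  intro m ρ hρ i
  exact PFunctor.isEmpty_B_of_map_eq (x := ⟨i, id⟩) (hρ _ _)
end

section
/- For a span of sets C ← M → D regarded via the bridge-diagram correspondence, the associated linear prafunctor Σ_f ∘ Δ_g : D-Set → C-Set (where f : M → C, g : M → D) has a right adjoint given by Π_g ∘ Δ_f, and dualizing (applying the closure into the dualizing span C ← C×D → D) interchanges: the dual of the right adjoint of the span equals the transpose span D ← M → C, i.e. the usual transpose of a span factors as 'take right adjoint, then dualize'. -/
universe u

open CategoryTheory

/-- The linear prafunctor `Σ_f ∘ Δ_g : D-Set → C-Set` associated to a span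
`C ←f− M −g→ D`. -/
def spanFunctor {C D M : Type u} (f : M → C) (g : M → D) :
    ((_ : D) → Type u) ⥤ ((_ : C) → Type u) where
  obj X c := Σ m : {m : M // f m = c}, X (g m.1)
  map α := fun c => TypeCat.ofHom (fun x => ⟨x.1, α (g x.1.1) x.2⟩)

/-- The conjunctive prafunctor `Π_g ∘ Δ_f : C-Set → D-Set` of the span. -/
def piFunctor {C D M : Type u} (f : M → C) (g : M → D) :
    ((_ : C) → Type u) ⥤ ((_ : D) → Type u) where
  obj Y d := ∀ m : {m : M // g m = d}, Y (f m.1)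
  map α := fun d => TypeCat.ofHom (fun y m => α (f m.1) (y m))

/-- The dual of a conjunctive bicomodule: the `D`-indexed family of representables
`Σ_{d∈D} y^{N_d}` (with `N_d` a set over `C` via `π`) is sent to the linear
functor `Y ↦ Σ_{n∈N_d} Y(π n)`. -/
def dualOfConjunctive {C D : Type u} (N : D → Type u) (π : ∀ d, N d → C) :
    ((_ : C) → Type u) ⥤ ((_ : D) → Type u) where
  obj Y d := Σ n : N d, Y (π d n)
  map α := fun d => TypeCat.ofHom (fun y => ⟨y.1, α (π d y.1) y.2⟩)

/-!
Families of sets indexed by `A` form the copresheaf category on the discrete category `A`.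
For `h : A → B`, restriction `Δ_h` has the fibrewise coproduct `Σ_h` as left adjoint and the
fibrewise product `Π_h` as right adjoint. The functor `Σ_f Δ_g` of a span is definitionally the
composite `Δ_g ⋙ Σ_f`, and `Π_g Δ_f` is `Δ_f ⋙ Π_g`, so composing `Δ_g ⊣ Π_g` with `Σ_f ⊣ Δ_f`
gives the adjunction. The dual of `Π_g Δ_f` replaces the product over the fibre `g⁻¹(d)` by a
sum over it, which is literally `Σ_g Δ_f`, the functor of the transposed span.
-/

namespace TypeFamily

variable {A B : Type u} (h : A → B)

def sigma : ((_ : A) → Type u) ⥤ ((_ : B) → Type u) where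
  obj X b := Σ a : {a : A // h a = b}, X a.1
  map α := fun b => TypeCat.ofHom (fun x => ⟨x.1, α x.1.1 x.2⟩)

def pi : ((_ : A) → Type u) ⥤ ((_ : B) → Type u) where
  obj X b := ∀ a : {a : A // h a = b}, X a.1
  map α := fun b => TypeCat.ofHom (fun x a => α a.1 (x a))

abbrev restrict : ((_ : B) → Type u) ⥤ ((_ : A) → Type u) := Pi.comap (fun _ => Type u) h

def sigmaRestrictAdj : sigma h ⊣ restrict h :=
  Adjunction.mkOfHomEquiv
    { homEquiv := fun X Y =>
        { toFun := fun α a => TypeCat.ofHom fun x => α (h a) ⟨⟨a, rfl⟩, x⟩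
          invFun := fun β b => TypeCat.ofHom fun x => x.1.2 ▸ β x.1.1 x.2
          left_inv := fun α => by
            funext b
            ext ⟨⟨a, rfl⟩, x⟩
            rfl
          right_inv := fun β => rfl }
      homEquiv_naturality_left_symm := fun _ _ => by
        funext b
        ext ⟨⟨a, rfl⟩, x⟩
        rfl
      homEquiv_naturality_right := fun _ _ => rfl }

def restrictPiAdj : restrict h ⊣ pi h :=
  Adjunction.mkOfHomEquiv
    { homEquiv := fun X Y =>
        { toFun := fun α b => TypeCat.ofHom fun x a => α a.1 (cast (congrArg X a.2.symm) x)
          invFun := fun β a => TypeCat.ofHom fun x => β (h a) x ⟨a, rfl⟩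
          left_inv := fun α => rfl
          right_inv := fun β => by
            funext b
            ext x
            funext a
            obtain ⟨a, rfl⟩ := a
            rfl }
      homEquiv_naturality_left_symm := fun _ _ => rfl
      homEquiv_naturality_right := fun _ _ => rfl }

end TypeFamily

open TypeFamily

section Span

variable {C D M : Type u} (f : M → C) (g : M → D)

def spanFunctorPiFunctorAdj : spanFunctor f g ⊣ piFunctor f g :=
  (restrictPiAdj g).comp (sigmaRestrictAdj f)

theorem dualOfConjunctive_fibers_eq_spanFunctor :
    dualOfConjunctive (fun d => {m : M // g m = d}) (fun _ m => f m.1) = spanFunctor g f :=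
  rfl

end Span

/-- for a span `C ← M → D`, the linear prafunctor `Σ_f Δ_g` has
right adjoint `Π_g Δ_f`, and the dual of this right adjoint (the conjunctive
bicomodule `Σ_{d∈D} y^{g⁻¹(d)}` over `C`) is the functor of the transpose span
`D ← M → C`: transposition factors as 'right adjoint, then dual'. -/
theorem span_transpose_as_dual_of_right_adjoint
    (C D M : Type u) (f : M → C) (g : M → D) :
    Nonempty (spanFunctor f g ⊣ piFunctor f g) ∧
    Nonempty (dualOfConjunctive (fun d => {m : M // g m = d})
        (fun _ m => f m.1) ≅ spanFunctor g f) :=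
  ⟨⟨spanFunctorPiFunctorAdj f g⟩, ⟨eqToIso (dualOfConjunctive_fibers_eq_spanFunctor f g)⟩⟩
end
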